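/- Let H be a complex Hilbert space and let T be a bounded self-adjoint operator on H such that liminf_{n→∞} ⟨T x_n, x_n⟩ ≥ 0 for every sequence (x_n) of unit vectors in H converging weakly to 0. Then the essential spectrum of T (the spectrum of the coset T + K(H) in the Calkin algebra L(H)/K(H)) is contained in [0,∞). -/

import Mathlib

open Filter Topology

set_option linter.unusedSectionVars false

variable (H : Type*) [NormedAddCommGroup H] [InnerProductSpace ℂ H] [CompleteSpace H]

/-- The closed two-sided ideal of compact operators in `L(H)`. -/
noncomputable def compactIdeal : TwoSidedIdeal (H →L[ℂ] H) :=
  TwoSidedIdeal.mk' {T : H →L[ℂ] H | IsCompactOperator ⇑T}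
    isCompactOperator_zero
    (fun hx hy => hx.add hy)
    (fun hx => hx.neg)
    (fun {x y} hy => by
      have : IsCompactOperator (⇑x ∘ ⇑y) := hy.continuous_comp x.continuous
      simpa [Function.comp] using this)
    (fun {x y} hx => by
      have : IsCompactOperator (⇑x ∘ ⇑y) := hx.comp_clm y
      simpa [Function.comp] using this)

/-- The Calkin algebra `L(H)/K(H)`. -/
abbrev Calkin := (compactIdeal H).ringCon.Quotient

/-- The quotient map `L(H) → L(H)/K(H)`. -/
noncomputable def calkinMk : (H →L[ℂ] H) →+* Calkin H := RingCon.mk' _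

lemma calkinMk_surjective : Function.Surjective (calkinMk H) := fun x =>
  Quotient.inductionOn' x fun y => ⟨y, rfl⟩

noncomputable instance : Algebra ℂ (Calkin H) :=
  RingHom.toAlgebra' ((calkinMk H).comp (algebraMap ℂ (H →L[ℂ] H))) (by
    intro c x
    obtain ⟨y, rfl⟩ := calkinMk_surjective H x
    rw [RingHom.comp_apply, ← map_mul, ← map_mul, Algebra.commutes])

/-- An element of the Calkin algebra is positive if it is self-adjoint (equivalently, has a
self-adjoint representative) and its spectrum is contained in `[0, ∞)`. -/
noncomputable def Calkin.IsPositive (x : Calkin H) : Prop :=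
  (∃ S : H →L[ℂ] H, IsSelfAdjoint S ∧ calkinMk H S = x) ∧
    spectrum ℂ x ⊆ {z : ℂ | 0 ≤ z.re ∧ z.im = 0}

variable {H}

/-!
A point `z` of the essential spectrum lies in `σ(T) ⊆ ℝ`. Suppose `z < a < 0` and put
`N = (a - T)⁺`, so that `T = a + (a - T)⁻ - N`. If `N` is compact, then `T` agrees modulo compacts
with `a + (a - T)⁻ ≥ a`, whose spectrum lies in `[a, ∞)`; this excludes `z`. Otherwise `N` is not
small on any subspace of finite codimension, which yields an orthonormal sequence `eₙ` with
`‖N eₙ‖ ≥ ε > 0`, and the unit vectors `xₙ = N eₙ / ‖N eₙ‖` tend weakly to `0`. Since `(a - T)⁻ N = 0`, they satisfy `⟨T xₙ, xₙ⟩ = a - ⟨N xₙ, xₙ⟩ ≤ a < 0`, against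
the hypothesis on the `liminf`.
-/

open scoped InnerProductSpace

section InnerProductSpace

variable {𝕜 E F : Type*} [RCLike 𝕜] [NormedAddCommGroup E] [InnerProductSpace 𝕜 E]

theorem exists_orthonormal_of_forall_finiteDimensional {P : E → Prop}
    (hP : ∀ K : Submodule 𝕜 E, FiniteDimensional 𝕜 K → ∃ x ∈ Kᗮ, ‖x‖ = 1 ∧ P x) :
    ∃ e : ℕ → E, Orthonormal 𝕜 e ∧ ∀ n, P (e n) := by
  choose pick pick_mem pick_norm pick_P using
    fun K : {K : Submodule 𝕜 E // FiniteDimensional 𝕜 K} => hP K.1 K.2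
  let K : ℕ → {K : Submodule 𝕜 E // FiniteDimensional 𝕜 K} := fun n =>
    Nat.rec ⟨⊥, inferInstance⟩ (fun _ K => have := K.2; ⟨K.1 ⊔ 𝕜 ∙ pick K, inferInstance⟩) n
  have K_mono : Monotone fun n => (K n).1 := monotone_nat_of_le_succ fun n => le_sup_left
  have mem_K : ∀ {m n}, m < n → pick (K m) ∈ (K n).1 := fun hmn =>
    K_mono hmn (le_sup_right (a := (K _).1) (Submodule.mem_span_singleton_self _))
  have inner_eq_zero : ∀ {m n}, m < n → ⟪pick (K m), pick (K n)⟫_𝕜 = 0 := fun hmn =>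
    Submodule.inner_right_of_mem_orthogonal (mem_K hmn) (pick_mem _)
  refine ⟨fun n => pick (K n), ⟨fun n => pick_norm _, fun m n hmn => ?_⟩, fun n => pick_P _⟩
  rcases hmn.lt_or_gt with h | h
  · exact inner_eq_zero h
  · exact inner_eq_zero_symm.mp (inner_eq_zero h)

theorem Orthonormal.tendsto_inner_cofinite_zero {ι : Type*} {e : ι → E} (he : Orthonormal 𝕜 e)
    (y : E) : Tendsto (fun i => ⟪e i, y⟫_𝕜) cofinite (𝓝 0) := by
  have h := (he.inner_products_summable (x := y)).tendsto_cofinite_zero.sqrt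
  simp only [Real.sqrt_sq (norm_nonneg _), Real.sqrt_zero] at h
  exact tendsto_zero_iff_norm_tendsto_zero.mpr h

theorem tendsto_inner_smul_zero {ι : Type*} {l : Filter ι} {x : ι → E} {c : ι → 𝕜}
    (hx : ∀ y, Tendsto (fun i => ⟪x i, y⟫_𝕜) l (𝓝 0))
    (hc : IsBoundedUnder (· ≤ ·) l fun i => ‖c i‖) (y : E) :
    Tendsto (fun i => ⟪c i • x i, y⟫_𝕜) l (𝓝 0) := by
  simp only [inner_smul_left]
  exact isBoundedUnder_le_mul_tendsto_zero (by simpa [Function.comp_def] using hc) (hx y)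

theorem tendsto_inner_apply_zero [CompleteSpace E] [NormedAddCommGroup F]
    [InnerProductSpace 𝕜 F] [CompleteSpace F] {ι : Type*} {l : Filter ι} {x : ι → E}
    (hx : ∀ y, Tendsto (fun i => ⟪x i, y⟫_𝕜) l (𝓝 0)) (A : E →L[𝕜] F) (y : F) :
    Tendsto (fun i => ⟪A (x i), y⟫_𝕜) l (𝓝 0) := by
  simpa only [ContinuousLinearMap.adjoint_inner_right] using hx (ContinuousLinearMap.adjoint A y)

theorem liminf_re_inner_apply_self_le (T : E →L[𝕜] E) {x : ℕ → E} (hx : ∀ n, ‖x n‖ = 1) {a : ℝ}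
    (ha : ∀ n, RCLike.re ⟪T (x n), x n⟫_𝕜 ≤ a) :
    liminf (fun n => RCLike.re ⟪T (x n), x n⟫_𝕜) atTop ≤ a := by
  refine liminf_le_of_frequently_le (.of_forall ha) (isBoundedUnder_of ⟨-‖T‖, fun n => ?_⟩)
  have := calc |RCLike.re ⟪T (x n), x n⟫_𝕜| ≤ ‖⟪T (x n), x n⟫_𝕜‖ := RCLike.abs_re_le_norm _
    _ ≤ ‖T (x n)‖ * ‖x n‖ := norm_inner_le_norm _ _
    _ ≤ ‖T‖ := by simpa [hx n] using T.le_opNorm (x n)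
  exact neg_le_of_abs_le this

theorem isCompactOperator_of_forall_exists_finiteDimensional [NormedAddCommGroup F]
    [NormedSpace 𝕜 F] [CompleteSpace F] (T : E →L[𝕜] F)
    (hT : ∀ ε > 0, ∃ K : Submodule 𝕜 E, FiniteDimensional 𝕜 K ∧ ∀ x ∈ Kᗮ, ‖T x‖ ≤ ε * ‖x‖) :
    IsCompactOperator T := by
  refine isClosed_setOfPred_isCompactOperator.closure_subset <|
    Metric.mem_closure_iff.mpr fun ε hε => ?_
  obtain ⟨K, hK, hTK⟩ := hT (ε / 2) (by positivity)
  refine ⟨T ∘L K.starProjection, ?_, ?_⟩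
  · exact (isCompactOperator_of_locallyCompactSpace_dom K.orthogonalProjectionOnto).clm_comp
      (T ∘L K.subtypeL)
  · have : ‖T - T ∘L K.starProjection‖ ≤ ε / 2 := by
      refine ContinuousLinearMap.opNorm_le_bound _ (by positivity) fun x => ?_
      have hx : x - K.starProjection x = Kᗮ.starProjection x :=
        (K.starProjection_orthogonal_val x).symm
      calc ‖(T - T ∘L K.starProjection) x‖ = ‖T (Kᗮ.starProjection x)‖ := by simp [← hx]
        _ ≤ ε / 2 * ‖Kᗮ.starProjection x‖ := hTK _ (Kᗮ.starProjection_apply_mem x)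
        _ ≤ ε / 2 * ‖x‖ := by gcongr; exact Kᗮ.norm_starProjection_apply_le x
    rw [dist_eq_norm]
    linarith

theorem exists_orthonormal_le_norm_apply_of_not_isCompactOperator [NormedAddCommGroup F]
    [NormedSpace 𝕜 F] [CompleteSpace F] {T : E →L[𝕜] F} (hT : ¬IsCompactOperator T) :
    ∃ ε > 0, ∃ e : ℕ → E, Orthonormal 𝕜 e ∧ ∀ n, ε ≤ ‖T (e n)‖ := by
  by_contra! h
  refine hT (isCompactOperator_of_forall_exists_finiteDimensional T fun ε hε => ?_)
  by_contra! hK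
  obtain ⟨e, he, hTe⟩ := exists_orthonormal_of_forall_finiteDimensional (P := (ε ≤ ‖T ·‖))
    fun K hK' => by
      obtain ⟨x, hxK, hTx⟩ := hK K hK'
      have hx : x ≠ 0 := by rintro rfl; simp at hTx
      refine ⟨(‖x‖⁻¹ : 𝕜) • x, Kᗮ.smul_mem _ hxK, norm_smul_inv_norm hx, ?_⟩
      rw [map_smul, norm_smul, norm_inv, RCLike.norm_ofReal, abs_norm]
      exact (le_inv_mul_iff₀ (norm_pos_iff.mpr hx)).mpr (mul_comm ε _ ▸ hTx.le)
  obtain ⟨n, hn⟩ := h ε hε e he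
  exact (hTe n).not_gt hn

end InnerProductSpace

section Calkin

noncomputable def calkinAlgHom : (H →L[ℂ] H) →ₐ[ℂ] Calkin H :=
  { calkinMk H with commutes' := fun _ => rfl }

theorem spectrum_calkinMk_subset (T : H →L[ℂ] H) :
    spectrum ℂ (calkinMk H T) ⊆ spectrum ℂ T :=
  AlgHom.spectrum_apply_subset calkinAlgHom T

theorem calkinMk_eq_of_isCompactOperator_sub {S T : H →L[ℂ] H} (h : IsCompactOperator (S - T)) :
    calkinMk H S = calkinMk H T :=
  (RingCon.eq _).mpr <|
    (TwoSidedIdeal.rel_iff _ _ _).mpr ((TwoSidedIdeal.mem_mk' _ _ _ _ _ _ _).mpr h)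

theorem le_re_of_mem_spectrum {A : Type*} [CStarAlgebra A] [PartialOrder A] [StarOrderedRing A]
    {S : A} (hS : IsSelfAdjoint S) {a : ℝ} (ha : algebraMap ℝ A a ≤ S) {z : ℂ}
    (hz : z ∈ spectrum ℂ S) : a ≤ z.re := by
  rw [hS.mem_spectrum_eq_re hz, ← Complex.coe_algebraMap, spectrum.algebraMap_mem_iff] at hz
  exact (algebraMap_le_iff_le_spectrum hS).mp ha _ hz

end Calkin

section SelfAdjoint

variable {T : H →L[ℂ] H}

theorem re_inner_apply_posPart_apply_nonneg {B : H →L[ℂ] H} (hB : IsSelfAdjoint B) (u : H) :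
    0 ≤ (⟪B (B⁺ u), B⁺ u⟫_ℂ).re := by
  have hBv : B (B⁺ u) = B⁺ (B⁺ u) :=
    calc B (B⁺ u) = (B⁺ - B⁻) (B⁺ u) := by rw [CFC.posPart_sub_negPart B hB]
      _ = B⁺ (B⁺ u) - (B⁻ * B⁺) u := rfl
      _ = B⁺ (B⁺ u) := by rw [CFC.negPart_mul_posPart, zero_apply, sub_zero]
  have hB_pos : (B⁺).IsPositive :=
    (ContinuousLinearMap.nonneg_iff_isPositive _).mp (CFC.posPart_nonneg B)
  rw [hBv]
  exact hB_pos.re_inner_nonneg_left _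

theorem re_inner_apply_posPart_sub_apply_le (hT : IsSelfAdjoint T) (a : ℝ) (u : H) :
    (⟪T ((algebraMap ℝ _ a - T)⁺ u), (algebraMap ℝ _ a - T)⁺ u⟫_ℂ).re
      ≤ a * ‖(algebraMap ℝ (H →L[ℂ] H) a - T)⁺ u‖ ^ 2 := by
  have hB := re_inner_apply_posPart_apply_nonneg ((IsSelfAdjoint.algebraMap _ (.all a)).sub hT) u
  set v := (algebraMap ℝ (H →L[ℂ] H) a - T)⁺ u
  rw [sub_apply, inner_sub_left, Complex.sub_re, ContinuousLinearMap.algebraMap_apply,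
    RCLike.real_smul_eq_coe_smul (K := ℂ), inner_smul_real_left, Complex.real_smul,
    Complex.re_ofReal_mul, ← RCLike.re_to_complex, inner_self_eq_norm_sq] at hB
  linarith

theorem le_re_of_mem_spectrum_calkinMk (hT : IsSelfAdjoint T) {a : ℝ}
    (hc : IsCompactOperator ⇑(algebraMap ℝ (H →L[ℂ] H) a - T)⁺) {z : ℂ}
    (hz : z ∈ spectrum ℂ (calkinMk H T)) : a ≤ z.re := by
  set B := algebraMap ℝ (H →L[ℂ] H) a - T
  have hB : IsSelfAdjoint B := (IsSelfAdjoint.algebraMap _ (.all a)).sub hT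
  have hTB : T = algebraMap ℝ _ a + B⁻ - B⁺ := by
    rw [add_sub_assoc, ← neg_sub, CFC.posPart_sub_negPart B hB, ← sub_eq_add_neg, sub_sub_cancel]
  have hcalkin : calkinMk H T = calkinMk H (algebraMap ℝ _ a + B⁻) :=
    calkinMk_eq_of_isCompactOperator_sub (by rw [hTB, sub_sub_cancel_left]; exact hc.neg)
  rw [hcalkin] at hz
  have hB_neg : 0 ≤ B⁻ := CFC.negPart_nonneg B
  exact le_re_of_mem_spectrum ((IsSelfAdjoint.algebraMap _ (.all a)).add (.of_nonneg hB_neg))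
    (le_add_of_nonneg_right hB_neg) (spectrum_calkinMk_subset _ hz)

theorem exists_weakly_null_re_inner_apply_le (hT : IsSelfAdjoint T) {a : ℝ}
    (hc : ¬IsCompactOperator ⇑(algebraMap ℝ (H →L[ℂ] H) a - T)⁺) :
    ∃ x : ℕ → H, (∀ n, ‖x n‖ = 1) ∧ (∀ y, Tendsto (fun n => ⟪x n, y⟫_ℂ) atTop (𝓝 0)) ∧
      ∀ n, (⟪T (x n), x n⟫_ℂ).re ≤ a := by
  set N := (algebraMap ℝ (H →L[ℂ] H) a - T)⁺
  obtain ⟨ε, hε, e, he, hNe⟩ := exists_orthonormal_le_norm_apply_of_not_isCompactOperator hc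
  have hNe0 : ∀ n, N (e n) ≠ 0 := fun n => norm_pos_iff.mp (hε.trans_le (hNe n))
  have hx : ∀ n, ‖N ((‖N (e n)‖⁻¹ : ℂ) • e n)‖ = 1 := fun n => by
    rw [map_smul]; exact norm_smul_inv_norm (hNe0 n)
  refine ⟨fun n => N ((‖N (e n)‖⁻¹ : ℂ) • e n), hx, tendsto_inner_apply_zero ?_ N, fun n => ?_⟩
  · refine tendsto_inner_smul_zero (Nat.cofinite_eq_atTop ▸ he.tendsto_inner_cofinite_zero)
      (isBoundedUnder_of ⟨ε⁻¹, fun n => ?_⟩)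
    rw [norm_inv, Complex.norm_real, norm_norm]
    exact inv_anti₀ hε (hNe n)
  · have := re_inner_apply_posPart_sub_apply_le hT a ((‖N (e n)‖⁻¹ : ℂ) • e n)
    rwa [hx n, one_pow, mul_one] at this

end SelfAdjoint

/-- If `T` is a bounded self-adjoint operator on a complex Hilbert space such
that `liminf ⟨T xₙ, xₙ⟩ ≥ 0` for every sequence of unit vectors `(xₙ)` converging weakly to `0`,
then the essential spectrum of `T` (the spectrum of the coset `T + K(H)` in the Calkin algebra)
is contained in `[0, ∞)`. -/
theorem essSpectrum_subset_nonneg_of_liminf_inner_nonneg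
    (T : H →L[ℂ] H) (hT : IsSelfAdjoint T)
    (h : ∀ x : ℕ → H, (∀ n, ‖x n‖ = 1) →
      (∀ y : H, Tendsto (fun n => (inner ℂ (x n) y : ℂ)) atTop (𝓝 0)) →
      0 ≤ Filter.liminf (fun n => (inner ℂ (T (x n)) (x n) : ℂ).re) atTop) :
    spectrum ℂ (calkinMk H T) ⊆ {z : ℂ | 0 ≤ z.re ∧ z.im = 0} := by
  intro z hz
  have hz_real : z = z.re := hT.mem_spectrum_eq_re (spectrum_calkinMk_subset T hz)
  refine ⟨?_, by rw [hz_real, Complex.ofReal_im]⟩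
  by_contra! hneg
  obtain ⟨a, hza, ha0⟩ := exists_between hneg
  by_cases hc : IsCompactOperator ⇑(algebraMap ℝ (H →L[ℂ] H) a - T)⁺
  · have := le_re_of_mem_spectrum_calkinMk hT hc hz
    linarith
  · obtain ⟨x, hx_norm, hx_weak, hx_le⟩ := exists_weakly_null_re_inner_apply_le hT hc
    have := (h x hx_norm hx_weak).trans (liminf_re_inner_apply_self_le T hx_norm hx_le)
    linarith
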